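/- Let u be C⁴ on the closed half-space ℝⁿ₊ with u = ∂u/∂x_n = 0 on the boundary, solving Δ²u = |x|^a|u|^{p−1}u, with |x|^{a/(p+1)} u ∈ L^{p+1}, Δu ∈ L², and R^{−4}∫_{A_R}u² + R^{−2}∫_{A_R}|∇u|² → 0 as R → ∞. If additionally ((n−4)/2)∫(Δu)² = ((n+a)/(p+1))∫|x|^a|u|^{p+1} and ∫(Δu)² = ∫|x|^a|u|^{p+1} over ℝⁿ₊, and 1 < p < (n+4+2a)/(n−4), then u ≡ 0. -/

import Mathlib

/-!
Combining the two identities gives `((n-4)/2) I = ((n+a)/(p+1)) I` for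
`I = ∫ |x|^a |u|^(p+1)`, and subcriticality of `p` says exactly that the two coefficients differ,
so `I = 0`. Hence `u` vanishes almost everywhere, and by continuity everywhere, in the open
half-space; on its boundary `u = 0` is a boundary condition.
-/

open MeasureTheory Set Filter

noncomputable def lap {n : ℕ} (f : EuclideanSpace ℝ (Fin n) → ℝ)
    (x : EuclideanSpace ℝ (Fin n)) : ℝ :=
  ∑ i, fderiv ℝ (fun y => fderiv ℝ f y (EuclideanSpace.single i 1)) x (EuclideanSpace.single i 1)

lemma lt_div_sub_four_iff_sub_four_div_two_lt {n a p : ℝ} (hn : 4 < n) (hp : -1 < p) :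
    p < (n + 4 + 2 * a) / (n - 4) ↔ (n - 4) / 2 < (n + a) / (p + 1) := by
  rw [lt_div_iff₀ (by linarith), div_lt_div_iff₀ two_pos (by linarith)]
  constructor <;> intro h <;> linarith

lemma eqOn_zero_of_integral_norm_rpow_mul_abs_rpow_eq_zero {E : Type*} [NormedAddCommGroup E]
    [MeasurableSpace E] [OpensMeasurableSpace E] {μ : Measure E} [μ.IsOpenPosMeasure]
    {S : Set E} (hS : IsOpen S) (h0 : (0 : E) ∉ S) {u : E → ℝ} (hu : ContinuousOn u S)
    {a q : ℝ} (hq : 0 < q) (hint : Integrable (fun x => ‖x‖ ^ a * |u x| ^ q) (μ.restrict S))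
    (h : ∫ x in S, ‖x‖ ^ a * |u x| ^ q ∂μ = 0) : EqOn u 0 S := by
  have hnonneg : 0 ≤ fun x => ‖x‖ ^ a * |u x| ^ q := fun x => by positivity
  have hae : (fun x => ‖x‖ ^ a * |u x| ^ q) =ᵐ[μ.restrict S] 0 :=
    (integral_eq_zero_iff_of_nonneg hnonneg hint).mp h
  have hu_ae : u =ᵐ[μ.restrict S] 0 := by
    filter_upwards [hae, ae_restrict_mem hS.measurableSet] with x hx hxS
    have hx0 : x ≠ 0 := fun hx0 => h0 (hx0 ▸ hxS)
    have hnorm : ‖x‖ ^ a ≠ 0 := (Real.rpow_pos_of_pos (norm_pos_iff.mpr hx0) a).ne'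
    have habs : |u x| ^ q = 0 := (mul_eq_zero.mp hx).resolve_left hnorm
    exact abs_eq_zero.mp ((Real.rpow_eq_zero (abs_nonneg _) hq.ne').mp habs)
  exact Measure.eqOn_open_of_ae_eq hu_ae hS hu continuousOn_const

theorem stmt_19_general {n : ℕ} (hn : 5 ≤ n) (i : Fin n) (p a : ℝ)
    (hp1 : 1 < p) (hp2 : p < ((n : ℝ) + 4 + 2 * a) / ((n : ℝ) - 4))
    (u : EuclideanSpace ℝ (Fin n) → ℝ)
    (hu : ContDiffOn ℝ 4 u {x | 0 ≤ x i})
    (hbd : ∀ x : EuclideanSpace ℝ (Fin n), x i = 0 →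
      u x = 0 ∧ fderiv ℝ u x (EuclideanSpace.single i 1) = 0)
    (hLp : Integrable (fun x => ‖x‖ ^ a * |u x| ^ (p + 1))
      (volume.restrict {x : EuclideanSpace ℝ (Fin n) | 0 < x i}))
    (hid1 : (((n : ℝ) - 4) / 2) * (∫ x in {x : EuclideanSpace ℝ (Fin n) | 0 < x i},
          (lap u x) ^ 2)
        = (((n : ℝ) + a) / (p + 1)) * (∫ x in {x : EuclideanSpace ℝ (Fin n) | 0 < x i},
            ‖x‖ ^ a * |u x| ^ (p + 1)))
    (hid2 : (∫ x in {x : EuclideanSpace ℝ (Fin n) | 0 < x i}, (lap u x) ^ 2)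
        = ∫ x in {x : EuclideanSpace ℝ (Fin n) | 0 < x i}, ‖x‖ ^ a * |u x| ^ (p + 1)) :
    ∀ x : EuclideanSpace ℝ (Fin n), 0 ≤ x i → u x = 0 := by
  have hn4 : (4 : ℝ) < n := by exact_mod_cast hn
  have hcoef := (lt_div_sub_four_iff_sub_four_div_two_lt hn4 (by linarith)).mp hp2
  have hI : ∫ x in {x : EuclideanSpace ℝ (Fin n) | 0 < x i}, ‖x‖ ^ a * |u x| ^ (p + 1) = 0 := by
    rw [hid2] at hid1
    exact (mul_eq_mul_right_iff.mp hid1).resolve_left hcoef.ne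
  have hS : IsOpen {x : EuclideanSpace ℝ (Fin n) | 0 < x i} :=
    isOpen_lt continuous_const (EuclideanSpace.proj i).continuous
  have hu0 := eqOn_zero_of_integral_norm_rpow_mul_abs_rpow_eq_zero hS (by simp)
    (hu.continuousOn.mono (ofPred_subset_ofPred.mpr fun _ => le_of_lt)) (by linarith) hLp hI
  intro x hx
  rcases hx.eq_or_lt with hx0 | hxpos
  · exact (hbd x hx0.symm).1
  · exact hu0 hxpos

/-- If a `C⁴` solution of `Δ²u = |x|^a|u|^(p-1)u` on the half-space with Dirichlet boundary
conditions satisfies the integrability and decay hypotheses together with the two identities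
`((n-4)/2)∫(Δu)² = ((n+a)/(p+1))∫|x|^a|u|^(p+1)` and `∫(Δu)² = ∫|x|^a|u|^(p+1)`, and
`1 < p < (n+4+2a)/(n-4)`, then `u ≡ 0`. -/
theorem stmt_19 {n : ℕ} (hn : 5 ≤ n) (i : Fin n) (p a : ℝ)
    (hp1 : 1 < p) (hp2 : p < ((n : ℝ) + 4 + 2 * a) / ((n : ℝ) - 4)) (ha : 0 ≤ a)
    (u : EuclideanSpace ℝ (Fin n) → ℝ)
    (hu : ContDiffOn ℝ 4 u {x | 0 ≤ x i})
    (hbd : ∀ x : EuclideanSpace ℝ (Fin n), x i = 0 →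
      u x = 0 ∧ fderiv ℝ u x (EuclideanSpace.single i 1) = 0)
    (hsol : ∀ x : EuclideanSpace ℝ (Fin n), 0 < x i →
      lap (lap u) x = ‖x‖ ^ a * |u x| ^ (p - 1) * u x)
    (hLp : Integrable (fun x => ‖x‖ ^ a * |u x| ^ (p + 1))
      (volume.restrict {x : EuclideanSpace ℝ (Fin n) | 0 < x i}))
    (hL2 : Integrable (fun x => (lap u x) ^ 2)
      (volume.restrict {x : EuclideanSpace ℝ (Fin n) | 0 < x i}))
    (hdecay : Tendsto (fun R : ℝ =>
        R ^ (-4 : ℝ) * (∫ x in {x : EuclideanSpace ℝ (Fin n) |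
            0 < x i ∧ R < ‖x‖ ∧ ‖x‖ < 2 * R}, (u x) ^ 2)
        + R ^ (-2 : ℝ) * (∫ x in {x : EuclideanSpace ℝ (Fin n) |
            0 < x i ∧ R < ‖x‖ ∧ ‖x‖ < 2 * R}, ‖gradient u x‖ ^ 2)) atTop (nhds 0))
    (hid1 : (((n : ℝ) - 4) / 2) * (∫ x in {x : EuclideanSpace ℝ (Fin n) | 0 < x i},
          (lap u x) ^ 2)
        = (((n : ℝ) + a) / (p + 1)) * (∫ x in {x : EuclideanSpace ℝ (Fin n) | 0 < x i},
            ‖x‖ ^ a * |u x| ^ (p + 1)))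
    (hid2 : (∫ x in {x : EuclideanSpace ℝ (Fin n) | 0 < x i}, (lap u x) ^ 2)
        = ∫ x in {x : EuclideanSpace ℝ (Fin n) | 0 < x i}, ‖x‖ ^ a * |u x| ^ (p + 1)) :
    ∀ x : EuclideanSpace ℝ (Fin n), 0 ≤ x i → u x = 0 :=
  stmt_19_general hn i p a hp1 hp2 u hu hbd hLp hid1 hid2
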